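/- arXiv:1707.07942 — 5 statements merged into one kernel-verified Lean document; each statement's English description precedes it below -/
import Mathlib

section
/- Let L : ℝ⁴ × ℝ⁴ → ℝ be a Lagrangian of class C² that is positively 1-homogeneous in its second argument, and let x : [a,b] → ℝ⁴ be a C² path with x'(t) ≠ 0. Then for all t, the Euler–Lagrange expression is orthogonal to the velocity: ⟨∂₁L(x(t), x'(t)) − d/dt [∂₂L(x(t), x'(t))], x'(t)⟩ = 0. -/
/-!
Euler's identity for the positively 1-homogeneous map `v ↦ L(x, v)` gives
`L(x, v) = ∂₂L(x, v) v`. Differentiating this along `s ↦ (x s, x' s)` with the chain rule on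
the left and the product rule on the right, the terms `∂₂L · x''` cancel and what remains is
`∂₁L · x' = (d/dt ∂₂L) · x'`.
-/

open ContinuousLinearMap Function

section PartialDerivatives

variable {𝕜 : Type*} [NontriviallyNormedField 𝕜]
  {E F G : Type*} [NormedAddCommGroup E] [NormedSpace 𝕜 E] [NormedAddCommGroup F]
  [NormedSpace 𝕜 F] [NormedAddCommGroup G] [NormedSpace 𝕜 G]
  {f : E → F → G} {a : E} {b : F}

theorem DifferentiableAt.fderiv_uncurry_comp_inl (hf : DifferentiableAt 𝕜 (uncurry f) (a, b)) :
    fderiv 𝕜 (fun y => f y b) a = (fderiv 𝕜 (uncurry f) (a, b)).comp (inl 𝕜 E F) :=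
  (HasFDerivAt.comp (f := (·, b)) a hf.hasFDerivAt (hasFDerivAt_prodMk_left a b)).fderiv

theorem DifferentiableAt.fderiv_uncurry_comp_inr (hf : DifferentiableAt 𝕜 (uncurry f) (a, b)) :
    fderiv 𝕜 (f a) b = (fderiv 𝕜 (uncurry f) (a, b)).comp (inr 𝕜 E F) :=
  (HasFDerivAt.comp (f := (a, ·)) b hf.hasFDerivAt (hasFDerivAt_prodMk_right a b)).fderiv

theorem DifferentiableAt.hasDerivAt_uncurry_comp {x : 𝕜 → E} {w : 𝕜 → F} {x' : E} {w' : F}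
    {t : 𝕜} (hf : DifferentiableAt 𝕜 (uncurry f) (x t, w t)) (hx : HasDerivAt x x' t)
    (hw : HasDerivAt w w' t) :
    HasDerivAt (fun s => f (x s) (w s))
      (fderiv 𝕜 (fun y => f y (w t)) (x t) x' + fderiv 𝕜 (f (x t)) (w t) w') t := by
  rw [hf.fderiv_uncurry_comp_inl, hf.fderiv_uncurry_comp_inr, ContinuousLinearMap.comp_apply,
    ContinuousLinearMap.comp_apply, ← map_add, inl_apply, inr_apply, Prod.mk_add_mk, add_zero,
    zero_add]
  exact hf.hasFDerivAt.comp_hasDerivAt t (hx.prodMk hw)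

theorem ContDiff.differentiableAt_fderiv_right_comp {x : 𝕜 → E} {w : 𝕜 → F} {t : 𝕜}
    (hf : ContDiff 𝕜 2 (uncurry f)) (hx : DifferentiableAt 𝕜 x t)
    (hw : DifferentiableAt 𝕜 w t) :
    DifferentiableAt 𝕜 (fun s => fderiv 𝕜 (f (x s)) (w s)) t := by
  have hdiff : Differentiable 𝕜 (uncurry f) := hf.differentiable two_ne_zero
  simp_rw [fun s => (hdiff (x s, w s)).fderiv_uncurry_comp_inr]
  have hDf : Differentiable 𝕜 (fderiv 𝕜 (uncurry f)) :=
    (hf.fderiv_right (m := 1) le_rfl).differentiable one_ne_zero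
  exact ((hDf _).comp t (hx.prodMk hw)).clm_comp (differentiableAt_const _)

end PartialDerivatives

section Homogeneous

variable {E F : Type*} [NormedAddCommGroup E] [NormedSpace ℝ E] [NormedAddCommGroup F]
  [NormedSpace ℝ F]

theorem fderiv_apply_self_of_pos_homogeneous {f : E → F} {v : E} (hf : DifferentiableAt ℝ f v)
    (hhom : ∀ l : ℝ, 0 < l → f (l • v) = l • f v) : fderiv ℝ f v v = f v := by
  have hchain : HasDerivAt (fun l : ℝ => f (l • v)) (fderiv ℝ f v v) 1 := by
    have hf₁ : HasFDerivAt f (fderiv ℝ f v) ((1 : ℝ) • v) := by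
      rw [one_smul]; exact hf.hasFDerivAt
    exact hf₁.comp_hasDerivAt 1 (by simpa using (hasDerivAt_id (1 : ℝ)).smul_const v)
  have hlinear : HasDerivAt (fun l : ℝ => f (l • v)) (f v) 1 := by
    refine (by simpa using (hasDerivAt_id (1 : ℝ)).smul_const (f v) :
      HasDerivAt (fun l : ℝ => l • f v) (f v) 1).congr_of_eventuallyEq ?_
    filter_upwards [Ioi_mem_nhds one_pos] with l hl using hhom l hl
  exact hchain.unique hlinear

end Homogeneous

theorem euler_lagrange_orthogonal_velocity_general
    (L : (Fin 4 → ℝ) → (Fin 4 → ℝ) → ℝ)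
    (hL : ContDiff ℝ 2 (fun p : (Fin 4 → ℝ) × (Fin 4 → ℝ) => L p.1 p.2))
    (hhom : ∀ (x v : Fin 4 → ℝ) (l : ℝ), 0 < l → L x (l • v) = l * L x v)
    (x : ℝ → Fin 4 → ℝ) (hx : ContDiff ℝ 2 x) :
    ∀ t : ℝ,
      (fderiv ℝ (fun y => L y (deriv x t)) (x t)) (deriv x t)
        - (deriv (fun s => fderiv ℝ (L (x s)) (deriv x s)) t) (deriv x t) = 0 := by
  intro t
  have hLd : Differentiable ℝ (uncurry L) := hL.differentiable two_ne_zero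
  have hxd : HasDerivAt x (deriv x t) t := (hx.differentiable two_ne_zero t).hasDerivAt
  have hx'd : HasDerivAt (deriv x) (deriv (deriv x) t) t :=
    ((hx.iterate_deriv' 1 1).differentiable one_ne_zero t).hasDerivAt
  have hEuler : (fun s => L (x s) (deriv x s)) =
      fun s => fderiv ℝ (L (x s)) (deriv x s) (deriv x s) := by
    ext s
    have hLs : DifferentiableAt ℝ (L (x s)) (deriv x s) :=
      (hLd _).comp _ ((differentiableAt_const (x s)).prodMk differentiableAt_id)
    exact (fderiv_apply_self_of_pos_homogeneous hLs (hhom (x s) _)).symm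
  have hchain := (hLd (x t, deriv x t)).hasDerivAt_uncurry_comp hxd hx'd
  have hproduct := (hL.differentiableAt_fderiv_right_comp hxd.differentiableAt
    hx'd.differentiableAt).hasDerivAt.clm_apply hx'd
  rw [hEuler] at hchain
  exact sub_eq_zero.mpr (add_right_cancel (hchain.unique hproduct))

/-- For a C² Lagrangian, positively 1-homogeneous in velocity, the
Euler–Lagrange expression along any C² path with nonvanishing velocity pairs to
zero with the velocity. -/
theorem euler_lagrange_orthogonal_velocity
    (L : (Fin 4 → ℝ) → (Fin 4 → ℝ) → ℝ)
    (hL : ContDiff ℝ 2 (fun p : (Fin 4 → ℝ) × (Fin 4 → ℝ) => L p.1 p.2))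
    (hhom : ∀ (x v : Fin 4 → ℝ) (l : ℝ), 0 < l → L x (l • v) = l * L x v)
    (x : ℝ → Fin 4 → ℝ) (hx : ContDiff ℝ 2 x)
    (hx' : ∀ t, deriv x t ≠ 0) :
    ∀ t : ℝ,
      (fderiv ℝ (fun y => L y (deriv x t)) (x t)) (deriv x t)
        - (deriv (fun s => fderiv ℝ (L (x s)) (deriv x s)) t) (deriv x t) = 0 :=
  euler_lagrange_orthogonal_velocity_general L hL hhom x hx
end

section
/- For the free-particle Lagrangian L(x,v) = −mc·√(η(v,v)), the Minkowski norm of the Euler–Lagrange vector of a C² path x(t) with timelike velocity equals mc·√( (η(x',x'')² − η(x',x')·η(x'',x'')) / η(x',x')³ ). (Note that the expression under the square root is nonnegative by the orthogonality of the EL vector to the timelike velocity.) -/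
/-
Abbreviate a = η(x',x'), b = η(x',x'') and e = η(x'',x''). The Euler–Lagrange vector is
−(mc/a²)·(a x'' − b x'), and a x'' − b x' is, up to the factor a, the component of x''
η-orthogonal to x'. Bilinearity and symmetry of η give η(a x'' − b x', a x'' − b x') = a(ae − b²),
so −η of the Euler–Lagrange vector with itself is (mc)²(b² − ae)/a³, whose square root is the claim.
-/

/-- The Minkowski bilinear form on ℝ⁴ with signature (+,−,−,−). -/
noncomputable def minkowski (u v : Fin 4 → ℝ) : ℝ :=
  u 0 * v 0 - u 1 * v 1 - u 2 * v 2 - u 3 * v 3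

namespace LinearMap.BilinForm

variable {R M : Type*} [CommRing R] [AddCommGroup M] [Module R M]

theorem IsSymm.apply_rejection_self {B : LinearMap.BilinForm R M} (hB : B.IsSymm) (u v : M) :
    B (B v v • u - B v u • v) (B v v • u - B v u • v) =
      B v v * (B v v * B u u - B v u ^ 2) := by
  simp only [map_sub, map_smul, LinearMap.sub_apply, LinearMap.smul_apply, smul_eq_mul,
    hB.eq u v]
  ring

end LinearMap.BilinForm

noncomputable def minkowskiForm : LinearMap.BilinForm ℝ (Fin 4 → ℝ) :=
  LinearMap.mk₂ ℝ minkowski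
    (fun _ _ _ => by simp only [minkowski, Pi.add_apply]; ring)
    (fun _ _ _ => by simp only [minkowski, Pi.smul_apply, smul_eq_mul]; ring)
    (fun _ _ _ => by simp only [minkowski, Pi.add_apply]; ring)
    (fun _ _ _ => by simp only [minkowski, Pi.smul_apply, smul_eq_mul]; ring)

theorem minkowskiForm_apply (u v : Fin 4 → ℝ) : minkowskiForm u v = minkowski u v := rfl

theorem minkowskiForm_isSymm : minkowskiForm.IsSymm :=
  ⟨fun u v => by simp only [minkowskiForm_apply, minkowski]; ring⟩

theorem neg_minkowski_smul_rejection_self (k : ℝ) (u v : Fin 4 → ℝ) :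
    -minkowski (k • (minkowski v v • u - minkowski v u • v))
        (k • (minkowski v v • u - minkowski v u • v)) =
      k ^ 2 * minkowski v v * (minkowski v u ^ 2 - minkowski v v * minkowski u u) := by
  have h := minkowskiForm_isSymm.apply_rejection_self u v
  simp only [minkowskiForm_apply] at h
  rw [← minkowskiForm_apply]
  simp only [map_smul, LinearMap.smul_apply, smul_eq_mul, minkowskiForm_apply, h]
  ring

theorem free_particle_el_vector_norm_general
    (m c : ℝ) (hm : 0 < m) (hc : 0 < c)
    (x : ℝ → Fin 4 → ℝ)
    (htl : ∀ t, 0 < minkowski (deriv x t) (deriv x t)) (t : ℝ) :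
    Real.sqrt (-(minkowski
        ((-(m * c) / (minkowski (deriv x t) (deriv x t)) ^ 2) •
          ((minkowski (deriv x t) (deriv x t)) • deriv (deriv x) t
            - (minkowski (deriv x t) (deriv (deriv x) t)) • deriv x t))
        ((-(m * c) / (minkowski (deriv x t) (deriv x t)) ^ 2) •
          ((minkowski (deriv x t) (deriv x t)) • deriv (deriv x) t
            - (minkowski (deriv x t) (deriv (deriv x) t)) • deriv x t)))) =
      m * c * Real.sqrt
        (((minkowski (deriv x t) (deriv (deriv x) t)) ^ 2
            - (minkowski (deriv x t) (deriv x t))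
              * (minkowski (deriv (deriv x) t) (deriv (deriv x) t)))
          / (minkowski (deriv x t) (deriv x t)) ^ 3) := by
  rw [neg_minkowski_smul_rejection_self]
  set a := minkowski (deriv x t) (deriv x t)
  set b := minkowski (deriv x t) (deriv (deriv x) t)
  set e := minkowski (deriv (deriv x) t) (deriv (deriv x) t)
  have ha : a ≠ 0 := (htl t).ne'
  have hsq : (-(m * c) / a ^ 2) ^ 2 * a * (b ^ 2 - a * e) =
      (m * c) ^ 2 * ((b ^ 2 - a * e) / a ^ 3) := by
    field_simp
  rw [hsq, Real.sqrt_mul (sq_nonneg _), Real.sqrt_sq (by positivity)]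

/-- the Minkowski norm √(−η(w,w)) of the Euler–Lagrange vector
w = −(mc/η(x',x')²)(η(x',x')x'' − η(x',x'')x') of a C² path with timelike
velocity equals mc·√((η(x',x'')² − η(x',x')η(x'',x''))/η(x',x')³). -/
theorem free_particle_el_vector_norm
    (m c : ℝ) (hm : 0 < m) (hc : 0 < c)
    (x : ℝ → Fin 4 → ℝ) (hx : ContDiff ℝ 2 x)
    (htl : ∀ t, 0 < minkowski (deriv x t) (deriv x t)) (t : ℝ) :
    Real.sqrt (-(minkowski
        ((-(m * c) / (minkowski (deriv x t) (deriv x t)) ^ 2) •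
          ((minkowski (deriv x t) (deriv x t)) • deriv (deriv x) t
            - (minkowski (deriv x t) (deriv (deriv x) t)) • deriv x t))
        ((-(m * c) / (minkowski (deriv x t) (deriv x t)) ^ 2) •
          ((minkowski (deriv x t) (deriv x t)) • deriv (deriv x) t
            - (minkowski (deriv x t) (deriv (deriv x) t)) • deriv x t)))) =
      m * c * Real.sqrt
        (((minkowski (deriv x t) (deriv (deriv x) t)) ^ 2
            - (minkowski (deriv x t) (deriv x t))
              * (minkowski (deriv (deriv x) t) (deriv (deriv x) t)))
          / (minkowski (deriv x t) (deriv x t)) ^ 3) :=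
  free_particle_el_vector_norm_general m c hm hc x htl t
end

section
/- Reverse Cauchy–Schwarz: if u and v are timelike vectors in Minkowski space ℝ⁴ (signature (+,−,−,−)) with η(u,u) > 0, η(v,v) > 0, then η(u,v)² ≥ η(u,u)·η(v,v), with equality if and only if u and v are linearly dependent. -/
set_option maxHeartbeats 1000000


/-- reverse Cauchy–Schwarz inequality for timelike vectors, with
equality iff the vectors are linearly dependent. -/
theorem reverse_cauchy_schwarz
    (u v : Fin 4 → ℝ) (hu : 0 < minkowski u u) (hv : 0 < minkowski v v) :
    minkowski u u * minkowski v v ≤ (minkowski u v) ^ 2 ∧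
      ((minkowski u v) ^ 2 = minkowski u u * minkowski v v ↔
        ¬ LinearIndependent ℝ ![u, v]) := by
  have hv0 : v 0 ≠ 0 := by
    intro h
    simp only [minkowski, h] at hv
    nlinarith [sq_nonneg (v 1), sq_nonneg (v 2), sq_nonneg (v 3)]
  have key : minkowski u u * (v 0)^2 - 2 * (u 0) * (v 0) * minkowski u v
      + (u 0)^2 * minkowski v v
      = -((u 1 * v 0 - v 1 * u 0)^2 + (u 2 * v 0 - v 2 * u 0)^2
          + (u 3 * v 0 - v 3 * u 0)^2) := by
    simp only [minkowski]; ring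
  have h1 : minkowski u u * (v 0)^2 - 2 * (u 0) * (v 0) * minkowski u v
      + (u 0)^2 * minkowski v v ≤ 0 := by
    rw [key]
    nlinarith [sq_nonneg (u 1 * v 0 - v 1 * u 0), sq_nonneg (u 2 * v 0 - v 2 * u 0),
      sq_nonneg (u 3 * v 0 - v 3 * u 0)]
  have h2 : minkowski v v * (minkowski u u * (v 0)^2 - 2 * (u 0) * (v 0) * minkowski u v
      + (u 0)^2 * minkowski v v) ≤ 0 := mul_nonpos_of_nonneg_of_nonpos hv.le h1
  have hv02 : (0:ℝ) < (v 0)^2 := by positivity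
  have hineq : minkowski u u * minkowski v v ≤ (minkowski u v)^2 := by
    nlinarith [h2, sq_nonneg (u 0 * minkowski v v - v 0 * minkowski u v), hv02]
  refine ⟨hineq, ?_, ?_⟩
  · -- equality → dependent
    intro heq hind
    -- from equality, the squares vanish
    have hsum : (u 1 * v 0 - v 1 * u 0)^2 + (u 2 * v 0 - v 2 * u 0)^2
        + (u 3 * v 0 - v 3 * u 0)^2 = 0 := by
      nlinarith [h2, sq_nonneg (u 0 * minkowski v v - v 0 * minkowski u v), hv02,
        sq_nonneg (u 1 * v 0 - v 1 * u 0), sq_nonneg (u 2 * v 0 - v 2 * u 0),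
        sq_nonneg (u 3 * v 0 - v 3 * u 0), key, heq, hv]
    have w1 : u 1 * v 0 - v 1 * u 0 = 0 := by
      have : (u 1 * v 0 - v 1 * u 0)^2 = 0 := by
        nlinarith [hsum, sq_nonneg (u 2 * v 0 - v 2 * u 0), sq_nonneg (u 3 * v 0 - v 3 * u 0),
          sq_nonneg (u 1 * v 0 - v 1 * u 0)]
      exact pow_eq_zero_iff (two_ne_zero) |>.mp this
    have w2 : u 2 * v 0 - v 2 * u 0 = 0 := by
      have : (u 2 * v 0 - v 2 * u 0)^2 = 0 := by
        nlinarith [hsum, sq_nonneg (u 2 * v 0 - v 2 * u 0), sq_nonneg (u 3 * v 0 - v 3 * u 0),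
          sq_nonneg (u 1 * v 0 - v 1 * u 0)]
      exact pow_eq_zero_iff (two_ne_zero) |>.mp this
    have w3 : u 3 * v 0 - v 3 * u 0 = 0 := by
      have : (u 3 * v 0 - v 3 * u 0)^2 = 0 := by
        nlinarith [hsum, sq_nonneg (u 2 * v 0 - v 2 * u 0), sq_nonneg (u 3 * v 0 - v 3 * u 0),
          sq_nonneg (u 1 * v 0 - v 1 * u 0)]
      exact pow_eq_zero_iff (two_ne_zero) |>.mp this
    have := (LinearIndependent.pair_iff.mp hind) (v 0) (-(u 0)) ?_
    · exact hv0 this.1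
    · funext i
      fin_cases i <;> simp [Pi.add_apply, Pi.smul_apply, smul_eq_mul] <;> linarith
  · -- dependent → equality
    intro hdep
    rw [LinearIndependent.pair_iff] at hdep
    push_neg at hdep
    obtain ⟨s, t, hst, hne⟩ := hdep
    have hi : ∀ i, s * u i + t * v i = 0 := by
      intro i
      have := congrFun hst i
      simpa [Pi.add_apply, Pi.smul_apply, smul_eq_mul] using this
    by_cases hs : s = 0
    · -- then t ≠ 0 and v = 0, contradicting hv
      have ht : t ≠ 0 := hne hs
      exfalso
      have hvz : ∀ i, v i = 0 := by
        intro i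
        have h := hi i
        rw [hs] at h
        simp only [zero_mul, zero_add] at h
        exact (mul_eq_zero.mp h).resolve_left ht
      simp only [minkowski, hvz] at hv
      norm_num at hv
    · have e0 := hi 0
      have e1 := hi 1
      have e2 := hi 2
      have e3 := hi 3
      have ha : s * minkowski u v = -t * minkowski v v := by
        simp only [minkowski]
        linear_combination v 0 * e0 - v 1 * e1 - v 2 * e2 - v 3 * e3
      have hb : s^2 * minkowski u u = t^2 * minkowski v v := by
        simp only [minkowski]
        linear_combination (s * u 0 - t * v 0) * e0 - (s * u 1 - t * v 1) * e1
          - (s * u 2 - t * v 2) * e2 - (s * u 3 - t * v 3) * e3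
      have hz : s^2 * ((minkowski u v)^2 - minkowski u u * minkowski v v) = 0 := by
        linear_combination (s * minkowski u v - t * minkowski v v) * ha
          - minkowski v v * hb
      have hs2 : s^2 ≠ 0 := pow_ne_zero 2 hs
      have := (mul_eq_zero.mp hz).resolve_left hs2
      linarith
end

section
/- Conversely, a C² path x : [a,b] → ℝ⁴ with timelike velocity has zero deviation (i.e., ∫_a^b √((η(x',x'')² − η(x',x')η(x'',x''))/η(x',x')³) dt = 0) if and only if for every t ∈ [a,b], the acceleration x''(t) is a scalar multiple of x'(t), i.e., the image of x is contained in a straight line (the path is an affine reparametrization of a geodesic). -/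
set_option maxHeartbeats 1000000 in
lemma mink_key (u v : Fin 4 → ℝ) (hu : 0 < minkowski u u) :
    0 ≤ minkowski u v ^ 2 - minkowski u u * minkowski v v ∧
      (minkowski u v ^ 2 - minkowski u u * minkowski v v = 0 ↔ ∃ k : ℝ, v = k • u) := by
  have hu' : u 1 ^ 2 + u 2 ^ 2 + u 3 ^ 2 < u 0 ^ 2 := by
    simp only [minkowski] at hu; nlinarith
  have hu0 : u 0 ≠ 0 := by
    intro h
    nlinarith [sq_nonneg (u 1), sq_nonneg (u 2), sq_nonneg (u 3)]
  have hu02 : 0 < u 0 ^ 2 := by positivity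
  have hident : (u 0) ^ 2 * (minkowski u v ^ 2 - minkowski u u * minkowski v v) =
      minkowski u u * ((u 0 * v 1 - v 0 * u 1) ^ 2 + (u 0 * v 2 - v 0 * u 2) ^ 2
        + (u 0 * v 3 - v 0 * u 3) ^ 2)
      + (u 1 * (u 0 * v 1 - v 0 * u 1) + u 2 * (u 0 * v 2 - v 0 * u 2)
          + u 3 * (u 0 * v 3 - v 0 * u 3)) ^ 2 := by
    simp only [minkowski]; ring
  have hrhs : 0 ≤ minkowski u u * ((u 0 * v 1 - v 0 * u 1) ^ 2 + (u 0 * v 2 - v 0 * u 2) ^ 2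
        + (u 0 * v 3 - v 0 * u 3) ^ 2)
      + (u 1 * (u 0 * v 1 - v 0 * u 1) + u 2 * (u 0 * v 2 - v 0 * u 2)
          + u 3 * (u 0 * v 3 - v 0 * u 3)) ^ 2 :=
    add_nonneg (mul_nonneg hu.le (by positivity)) (sq_nonneg _)
  have hnn : 0 ≤ minkowski u v ^ 2 - minkowski u u * minkowski v v := by
    by_contra hd
    push_neg at hd
    have := mul_neg_of_pos_of_neg hu02 hd
    linarith [hident ▸ hrhs]
  refine ⟨hnn, ?_, ?_⟩
  · intro h
    rw [h, mul_zero] at hident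
    set w1 := u 0 * v 1 - v 0 * u 1 with hw1d
    set w2 := u 0 * v 2 - v 0 * u 2 with hw2d
    set w3 := u 0 * v 3 - v 0 * u 3 with hw3d
    have hs : w1 ^ 2 + w2 ^ 2 + w3 ^ 2 ≤ 0 := by
      by_contra hpos
      push_neg at hpos
      have h1 := mul_pos hu hpos
      have h2 := sq_nonneg (u 1 * w1 + u 2 * w2 + u 3 * w3)
      linarith
    have hw1 : w1 = 0 := pow_eq_zero_iff two_ne_zero |>.1
      (le_antisymm (by linarith [sq_nonneg w2, sq_nonneg w3]) (sq_nonneg w1))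
    have hw2 : w2 = 0 := pow_eq_zero_iff two_ne_zero |>.1
      (le_antisymm (by linarith [sq_nonneg w1, sq_nonneg w3]) (sq_nonneg w2))
    have hw3 : w3 = 0 := pow_eq_zero_iff two_ne_zero |>.1
      (le_antisymm (by linarith [sq_nonneg w1, sq_nonneg w2]) (sq_nonneg w3))
    rw [hw1d, sub_eq_zero] at hw1
    rw [hw2d, sub_eq_zero] at hw2
    rw [hw3d, sub_eq_zero] at hw3
    refine ⟨v 0 / u 0, ?_⟩
    funext i
    fin_cases i
    · show v 0 = v 0 / u 0 * u 0
      field_simp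
    · show v 1 = v 0 / u 0 * u 1
      field_simp
      linear_combination hw1
    · show v 2 = v 0 / u 0 * u 2
      field_simp
      linear_combination hw2
    · show v 3 = v 0 / u 0 * u 3
      field_simp
      linear_combination hw3
  · rintro ⟨k, rfl⟩
    simp only [minkowski, Pi.smul_apply, smul_eq_mul]
    ring

lemma integral_zero_imp_zero {f : ℝ → ℝ} {a b : ℝ} (hab : a < b)
    (hc : Continuous f) (h0 : ∀ t, 0 ≤ f t)
    (hI : (∫ t in a..b, f t) = 0) : ∀ t ∈ Set.Icc a b, f t = 0 := by
  intro t₀ ht₀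
  by_contra hne
  have hpos : 0 < f t₀ := lt_of_le_of_ne (h0 t₀) (Ne.symm hne)
  have hU : IsOpen (f ⁻¹' Set.Ioi 0) := isOpen_Ioi.preimage hc
  -- t₀ is in closure of Ioo a b
  have hcl : t₀ ∈ closure (Set.Ioo a b) := by
    rw [closure_Ioo hab.ne]; exact ht₀
  have hmem : ((f ⁻¹' Set.Ioi 0) ∩ Set.Ioo a b).Nonempty := by
    rcases mem_closure_iff.1 hcl _ hU hpos with ⟨s, hsU, hsI⟩
    exact ⟨s, hsU, hsI⟩
  have hop : IsOpen ((f ⁻¹' Set.Ioi 0) ∩ Set.Ioo a b) := hU.inter isOpen_Ioo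
  have hvol : 0 < MeasureTheory.volume ((f ⁻¹' Set.Ioi 0) ∩ Set.Ioo a b) :=
    hop.measure_pos _ hmem
  have hsub : (f ⁻¹' Set.Ioi 0) ∩ Set.Ioo a b ⊆ Function.support f ∩ Set.Ioc a b := by
    rintro s ⟨hs1, hs2⟩
    exact ⟨ne_of_gt hs1, Set.Ioo_subset_Ioc_self hs2⟩
  have : 0 < ∫ t in a..b, f t := by
    rw [intervalIntegral.integral_pos_iff_support_of_nonneg_ae
      (Filter.Eventually.of_forall h0) (hc.intervalIntegrable a b)]
    exact ⟨hab, lt_of_lt_of_le hvol (MeasureTheory.measure_mono hsub)⟩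
  linarith

/-- a C² path with timelike velocity has zero deviation iff its
acceleration is everywhere a scalar multiple of its velocity (i.e. it is a
reparametrized straight line / geodesic). -/
theorem deviation_zero_iff_geodesic
    (a b : ℝ) (hab : a < b)
    (x : ℝ → Fin 4 → ℝ) (hx : ContDiff ℝ 2 x)
    (htl : ∀ t, 0 < minkowski (deriv x t) (deriv x t)) :
    (∫ t in a..b, Real.sqrt
        (((minkowski (deriv x t) (deriv (deriv x) t)) ^ 2
            - minkowski (deriv x t) (deriv x t)
              * minkowski (deriv (deriv x) t) (deriv (deriv x) t))
          / (minkowski (deriv x t) (deriv x t)) ^ 3) = 0) ↔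
      ∀ t ∈ Set.Icc a b, ∃ k : ℝ, deriv (deriv x) t = k • deriv x t := by
  set u : ℝ → Fin 4 → ℝ := deriv x with hu
  set v : ℝ → Fin 4 → ℝ := deriv (deriv x) with hv
  have hcu : Continuous u := hx.continuous_deriv one_le_two
  have hcv : Continuous v := by
    have h2 : ContDiff ℝ ((0 + 2 : ℕ) : WithTop ℕ∞) x := by exact_mod_cast hx
    have h0 := ContDiff.iterate_deriv' 0 2 h2
    simp only [Function.iterate_succ, Function.iterate_zero, Function.comp_apply,
      Function.comp, id] at h0
    exact h0.continuous
  set N : ℝ → ℝ := fun t => minkowski (u t) (v t) ^ 2 - minkowski (u t) (u t) * minkowski (v t) (v t) with hN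
  set D : ℝ → ℝ := fun t => minkowski (u t) (u t) with hD
  have hcui : ∀ i, Continuous fun t => u t i := fun i => (continuous_apply i).comp hcu
  have hcvi : ∀ i, Continuous fun t => v t i := fun i => (continuous_apply i).comp hcv
  have hcN : Continuous N := by
    simp only [hN, minkowski]
    fun_prop
  have hcD : Continuous D := by
    simp only [hD, minkowski]
    fun_prop
  have hDpos : ∀ t, 0 < D t := htl
  have hNnn : ∀ t, 0 ≤ N t := fun t => (mink_key (u t) (v t) (htl t)).1
  have hf : Continuous fun t => Real.sqrt (N t / D t ^ 3) := by
    apply Real.continuous_sqrt.comp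
    exact hcN.div (hcD.pow 3) (fun t => (pow_pos (htl t) 3).ne')
  constructor
  · intro hI t₀ ht₀
    have hz := integral_zero_imp_zero hab hf (fun t => Real.sqrt_nonneg _) hI t₀ ht₀
    have hq : N t₀ / D t₀ ^ 3 = 0 := by
      have h1 : 0 ≤ N t₀ / D t₀ ^ 3 := div_nonneg (hNnn t₀) (pow_pos (hDpos t₀) 3).le
      by_contra hne
      have : 0 < N t₀ / D t₀ ^ 3 := lt_of_le_of_ne h1 (Ne.symm hne)
      exact (Real.sqrt_pos.2 this).ne' hz
    have hN0 : N t₀ = 0 := by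
      rcases div_eq_zero_iff.1 hq with h | h
      · exact h
      · exact absurd h (pow_pos (hDpos t₀) 3).ne'
    exact ((mink_key (u t₀) (v t₀) (htl t₀)).2).1 hN0
  · intro hgeo
    have : Set.EqOn (fun t => Real.sqrt (N t / D t ^ 3)) (fun _ => (0:ℝ)) (Set.uIcc a b) := by
      intro t ht
      rw [Set.uIcc_of_le hab.le] at ht
      have hN0 : N t = 0 := ((mink_key (u t) (v t) (htl t)).2).2 (hgeo t ht)
      simp [hN0]
    rw [intervalIntegral.integral_congr this, intervalIntegral.integral_const, smul_zero]
end

section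
/- Twin paradox proper time inequality: in 2-dimensional Minkowski space, let x : [a,b] → ℝ² be a C¹ timelike future-pointing path from A = (0,0) to D = (T, 0) with T > 0 that is not the straight segment. Then its proper time ∫_a^b √(η(x',x')) dt is strictly less than T, the proper time of the straight path from A to D. -/
/-! Pointwise, the proper-time rate `√(η(x', x'))` is at most the coordinate-time rate `x'₀`, with
equality only where the spatial velocity `x'₁` vanishes; integrating, the proper time is at most
`∫ x'₀ = T`. Since `x₁` vanishes at `a` but not everywhere on `[a, b]`, the mean value theorem gives
a point where `x'₁ ≠ 0`, and continuity of `x'` makes the inequality of integrals strict. -/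

/-- The 2-dimensional Minkowski bilinear form with signature (+,−). -/
noncomputable def mink2 (u v : Fin 2 → ℝ) : ℝ := u 0 * v 0 - u 1 * v 1

open Set

lemma sqrt_mink2_self_le {v : Fin 2 → ℝ} (hv : 0 ≤ v 0) : √(mink2 v v) ≤ v 0 :=
  (Real.sqrt_le_left hv).2 (by unfold mink2; nlinarith [sq_nonneg (v 1)])

lemma sqrt_mink2_self_lt {v : Fin 2 → ℝ} (hv : 0 < v 0) (hv₁ : v 1 ≠ 0) :
    √(mink2 v v) < v 0 :=
  (Real.sqrt_lt' hv).2 (by unfold mink2; nlinarith [sq_pos_of_ne_zero hv₁])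

section Coordinates

variable {ι : Type*} [Fintype ι] {x : ℝ → ι → ℝ}

lemma DifferentiableAt.hasDerivAt_apply {t : ℝ} (hx : DifferentiableAt ℝ x t) (i : ι) :
    HasDerivAt (fun s => x s i) (deriv x t i) t :=
  hasDerivAt_pi.1 hx.hasDerivAt i

lemma ContDiff.integral_deriv_apply (hx : ContDiff ℝ 1 x) (a b : ℝ) (i : ι) :
    ∫ t in a..b, deriv x t i = x b i - x a i :=
  intervalIntegral.integral_eq_sub_of_hasDerivAt
    (fun t _ => (hx.differentiable one_ne_zero t).hasDerivAt_apply i)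
    (((continuous_apply i).comp (hx.continuous_deriv le_rfl)).intervalIntegrable a b)

lemma exists_deriv_apply_ne_zero_of_ne (hx : Differentiable ℝ x) {a b : ℝ} (hab : a < b)
    {i : ι} (hne : x a i ≠ x b i) : ∃ c ∈ Ioo a b, deriv x c i ≠ 0 := by
  obtain ⟨c, hc, hslope⟩ := exists_hasDerivAt_eq_slope (fun s => x s i) (fun t => deriv x t i) hab
    ((continuous_apply i).comp hx.continuous).continuousOn fun t _ => (hx t).hasDerivAt_apply i
  refine ⟨c, hc, ?_⟩
  rw [hslope]
  exact div_ne_zero (sub_ne_zero.2 hne.symm) (sub_ne_zero.2 hab.ne')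

end Coordinates

theorem twin_paradox_proper_time_general
    (T : ℝ) (a b : ℝ)
    (x : ℝ → Fin 2 → ℝ) (hx : ContDiff ℝ 1 x)
    (hxa : x a = ![0, 0]) (hxb : x b = ![T, 0])
    (hfut : ∀ t, 0 < deriv x t 0)
    (hnotline : ∃ t ∈ Set.Icc a b, x t 1 ≠ 0) :
    (∫ t in a..b, Real.sqrt (mink2 (deriv x t) (deriv x t))) < T := by
  obtain ⟨t₀, ⟨hat₀, ht₀b⟩, ht₀⟩ := hnotline
  have hxa₁ : x a 1 = 0 := by simp [hxa]
  have hat₀ : a < t₀ := hat₀.lt_of_ne (by rintro rfl; exact ht₀ hxa₁)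
  obtain ⟨c, hc, hc₁⟩ := exists_deriv_apply_ne_zero_of_ne (hx.differentiable one_ne_zero) hat₀
    (hxa₁.trans_ne ht₀.symm)
  have hcont : Continuous (deriv x) := hx.continuous_deriv le_rfl
  calc (∫ t in a..b, √(mink2 (deriv x t) (deriv x t))) < ∫ t in a..b, deriv x t 0 :=
        intervalIntegral.integral_lt_integral_of_continuousOn_of_le_of_exists_lt
          (hat₀.trans_le ht₀b) (by unfold mink2; fun_prop) (by fun_prop)
          (fun t _ => sqrt_mink2_self_le (hfut t).le)
          ⟨c, ⟨hc.1.le, hc.2.le.trans ht₀b⟩, sqrt_mink2_self_lt (hfut c) hc₁⟩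
    _ = T := by simp [hx.integral_deriv_apply, hxa, hxb]

/-- twin paradox proper time: a C¹ timelike future-pointing path
from (0,0) to (T,0) which is not the straight segment has proper time strictly
less than T. -/
theorem twin_paradox_proper_time
    (T : ℝ) (hT : 0 < T) (a b : ℝ) (hab : a ≤ b)
    (x : ℝ → Fin 2 → ℝ) (hx : ContDiff ℝ 1 x)
    (hxa : x a = ![0, 0]) (hxb : x b = ![T, 0])
    (hfut : ∀ t, 0 < deriv x t 0)
    (htl : ∀ t, 0 < mink2 (deriv x t) (deriv x t))
    (hnotline : ∃ t ∈ Set.Icc a b, x t 1 ≠ 0) :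
    (∫ t in a..b, Real.sqrt (mink2 (deriv x t) (deriv x t))) < T :=
  twin_paradox_proper_time_general T a b x hx hxa hxb hfut hnotline
end
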